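/- arXiv:0710.4605 — 2 statements merged into one kernel-verified Lean document; each statement's English description precedes it below -/
import Mathlib

section
/- Let p be a prime, let n ≥ 2, and let a₁, …, aₙ be integers with 0 < a₁ < a₂ < ⋯ < aₙ < p and gcd(a₁, …, aₙ) = 1. Let A = {ā₁, …, āₙ} ⊆ ℤ/pℤ be the set of their residues modulo p. Then p/aₙ ≤ h^c(A) ≤ w(A) < p/aₙ + aₙ + a_{n−1} (as real numbers). Moreover, if a_{n−1}(aₙ − 1) < p, then h^c(A) < p/aₙ + aₙ. -/
open scoped Pointwise

/-- `iterSum A k` is the `k`-fold sumset `A + ⋯ + A` (with `iterSum A 0 = {0}`). -/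
def iterSum {G : Type*} [AddCommMonoid G] (A : Set G) : ℕ → Set G
  | 0 => {0}
  | k + 1 => iterSum A k + A

/-- The coheight of `A`: the least positive `k` with `0 ∈ A + ⋯ + A` (`k` copies). -/
noncomputable def coheight {G : Type*} [AddCommMonoid G] (A : Set G) : ℕ :=
  sInf {k : ℕ | 0 < k ∧ (0 : G) ∈ iterSum A k}

/-- The width of `A`: the least positive `k` such that every element of `G` is a sum of
at most `k` elements of `A`. -/
noncomputable def width {G : Type*} [AddCommMonoid G] (A : Set G) : ℕ :=
  sInf {k : ℕ | 0 < k ∧ ∀ g : G, ∃ j : ℕ, 0 < j ∧ j ≤ k ∧ g ∈ iterSum A j}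

/-!
Write `q = aₙ`, `r = aₙ₋₁` and `T = {a₁, …, aₙ}`. If `0` is a sum of `k` elements of `A`, the
corresponding integer sum is a positive multiple of `p` and at most `k q`, so `p ≤ k q`.

For the upper bounds, `gcd T = 1` makes the residues of `a₁, …, aₙ₋₁` generate `ℤ/qℤ`; the sumsets
`k • X` of a set `X ∋ 0` grow strictly until they fill the subgroup generated by `X`, so `q - 1`
summands suffice. Hence every `N ≥ (q - 1) r` is congruent mod `q` to a sum `B ≤ N` of `c ≤ q - 1`
elements among `a₁, …, aₙ₋₁`, and `N = B + u q` writes `N` as a sum of `t = c + u` elements of `T`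
with `q t ≤ N + (q - 1)²`. Taking `N ∈ [(q - 1) r, (q - 1) r + p)` in the right residue class
bounds the width, and `N = p`, allowed when `r (q - 1) < p`, bounds the coheight.
-/

namespace Set

theorem nsmul_insert_zero_subset {M : Type*} [AddMonoid M] (s : Set M) :
    ∀ n : ℕ, n • insert 0 s ⊆ ⋃ m ≤ n, m • s
  | 0 => by simp
  | n + 1 => by
    rw [succ_nsmul]
    rintro _ ⟨y, hy, z, hz, rfl⟩
    obtain ⟨m, hm, hy⟩ := mem_iUnion₂.mp (nsmul_insert_zero_subset s n hy)
    rcases hz with rfl | hz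
    · exact mem_iUnion₂.mpr ⟨m, by omega, by simpa using hy⟩
    · exact mem_iUnion₂.mpr ⟨m + 1, by omega, by rw [succ_nsmul]; exact add_mem_add hy hz⟩

theorem nsmul_Icc_subset {α : Type*} [AddMonoid α] [Preorder α] [AddLeftMono α] [AddRightMono α]
    (a b : α) : ∀ n : ℕ, n • Icc a b ⊆ Icc (n • a) (n • b)
  | 0 => by simp
  | n + 1 => by
    simp only [succ_nsmul]
    exact (add_subset_add_right (nsmul_Icc_subset a b n)).trans (Icc_add_Icc_subset _ _ _ _)

end Set

theorem Finset.nsmul_card_sub_one_eq_closure {G : Type*} [AddGroup G] [Fintype G]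
    [DecidableEq G] {X : Finset G} (hX : 0 ∈ X) :
    ((Fintype.card G - 1) • X : Set G) = AddSubgroup.closure (X : Set G) := by
  have hsub (n : ℕ) : (n • X : Set G) ⊆ AddSubgroup.closure (X : Set G) := by
    rw [← Set.nsmul_add_addSubgroupClosure ⟨0, hX⟩ n]
    exact Set.subset_add_left _ (AddSubgroup.zero_mem _)
  have hgrow (n : ℕ) :
      (n • X : Set G) = AddSubgroup.closure (X : Set G) ∨ n + 1 ≤ (n • X).card := by
    induction n with
    | zero => simp
    | succ n ih =>
      by_cases hn : (n • X : Set G) = AddSubgroup.closure (X : Set G)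
      · refine .inl ((hsub _).antisymm ?_)
        rw [← hn]
        exact_mod_cast Finset.nsmul_subset_nsmul_right hX n.le_succ
      obtain rfl | hXnt := X.eq_singleton_or_nontrivial hX
      · simp [AddSubgroup.closure_singleton_zero] at hn
      · have := card_lt_card (nsmul_ssubset_nsmul_succ_of_nsmul_ne_closure hX hXnt hn)
        have := ih.resolve_left hn
        omega
  refine (hgrow _).elim id fun h ↦ (hsub _).antisymm ?_
  have : (Fintype.card G - 1) • X = univ := by
    have := Fintype.card_pos (α := G)
    exact eq_univ_of_card _ ((card_le_univ _).antisymm (by omega))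
  rw [← coe_nsmul, this, coe_univ]
  exact Set.subset_univ _

theorem one_mem_closure_natCast_of_gcd_eq_one {R ι : Type*} [AddGroupWithOne R] {s : Finset ι}
    {f : ι → ℕ} (h : s.gcd f = 1) :
    (1 : R) ∈ AddSubgroup.closure ((fun i ↦ (f i : R)) '' s) := by
  obtain ⟨m, hm⟩ := Int.subgroup_cyclic
    ((AddSubgroup.closure ((fun i ↦ (f i : R)) '' s)).comap (Int.castAddHom R))
  have hdvd (i : ι) (hi : i ∈ s) : m.natAbs ∣ f i := by
    have : (f i : ℤ) ∈ AddSubgroup.closure {m} := hm ▸ AddSubgroup.subset_closure ⟨i, hi, by simp⟩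
    rw [← AddSubgroup.zmultiples_eq_closure, Int.mem_zmultiples_iff] at this
    exact Int.natAbs_dvd_natAbs.mpr this
  have hm1 : (1 : ℤ) ∈ AddSubgroup.closure {m} := by
    rw [← AddSubgroup.zmultiples_eq_closure, Int.mem_zmultiples_iff]
    exact Int.natAbs_dvd_natAbs.mp (by simpa [h] using Finset.dvd_gcd hdvd)
  simpa using (hm ▸ hm1 : (1 : ℤ) ∈ (AddSubgroup.closure _).comap (Int.castAddHom R))

theorem natCast_mem_nsmul_natCast_image {R : Type*} [AddMonoidWithOne R] {T : Set ℕ} {k m : ℕ}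
    (h : m ∈ k • T) : (m : R) ∈ k • ((Nat.cast : ℕ → R) '' T) := by
  rw [← Nat.coe_castAddMonoidHom, ← Set.image_nsmul]
  exact Set.mem_image_of_mem _ h

theorem exists_mem_nsmul_natCast_eq {R : Type*} [AddMonoidWithOne R] {T : Set ℕ} {k : ℕ} {x : R}
    (h : x ∈ k • ((Nat.cast : ℕ → R) '' T)) : ∃ m ∈ k • T, (m : R) = x := by
  rwa [← Nat.coe_castAddMonoidHom, ← Set.image_nsmul] at h

section CoheightWidth

variable {G : Type*} [AddCommMonoid G] {A : Set G} {k : ℕ}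

theorem iterSum_eq_nsmul (A : Set G) : ∀ k : ℕ, iterSum A k = k • A
  | 0 => (zero_nsmul A).symm
  | k + 1 => by rw [iterSum, iterSum_eq_nsmul A k, succ_nsmul]

theorem coheight_eq_sInf (A : Set G) :
    coheight A = sInf {k : ℕ | 0 < k ∧ (0 : G) ∈ k • A} := by
  simp only [coheight, iterSum_eq_nsmul]

theorem width_eq_sInf (A : Set G) :
    width A = sInf {k : ℕ | 0 < k ∧ ∀ g : G, ∃ j : ℕ, 0 < j ∧ j ≤ k ∧ g ∈ j • A} := by
  simp only [width, iterSum_eq_nsmul]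

theorem coheight_le (hk : 0 < k) (h : (0 : G) ∈ k • A) : coheight A ≤ k := by
  rw [coheight_eq_sInf]
  exact Nat.sInf_le (Set.mem_ofPred.mpr ⟨hk, h⟩)

theorem zero_mem_nsmul_coheight (h : 0 < coheight A) : (0 : G) ∈ coheight A • A := by
  rw [coheight_eq_sInf] at h ⊢
  exact (Nat.sInf_mem (Nat.nonempty_of_pos_sInf h)).2

theorem width_le (h : ∀ g : G, ∃ j : ℕ, 0 < j ∧ j ≤ k ∧ g ∈ j • A) : width A ≤ k := by
  obtain ⟨j, hj, hjk, -⟩ := h 0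
  rw [width_eq_sInf]
  exact Nat.sInf_le (Set.mem_ofPred.mpr ⟨hj.trans_le hjk, h⟩)

theorem width_pos (h : ∀ g : G, ∃ j : ℕ, 0 < j ∧ j ≤ k ∧ g ∈ j • A) : 0 < width A := by
  obtain ⟨j, hj, hjk, -⟩ := h 0
  have hne : {k : ℕ | 0 < k ∧ ∀ g : G, ∃ j : ℕ, 0 < j ∧ j ≤ k ∧ g ∈ j • A}.Nonempty :=
    ⟨k, hj.trans_le hjk, h⟩
  rw [width_eq_sInf]
  exact (Nat.sInf_mem hne).1

theorem exists_zero_mem_nsmul_of_width_pos (hw : 0 < width A) :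
    ∃ j, 0 < j ∧ j ≤ width A ∧ (0 : G) ∈ j • A := by
  rw [width_eq_sInf] at hw ⊢
  exact (Nat.sInf_mem (Nat.nonempty_of_pos_sInf hw)).2 0

theorem coheight_pos_of_width_pos (hw : 0 < width A) : 0 < coheight A := by
  obtain ⟨j, hj, -, h⟩ := exists_zero_mem_nsmul_of_width_pos hw
  have hne : {k : ℕ | 0 < k ∧ (0 : G) ∈ k • A}.Nonempty := ⟨j, hj, h⟩
  rw [coheight_eq_sInf]
  exact (Nat.sInf_mem hne).1

theorem coheight_le_width (hw : 0 < width A) : coheight A ≤ width A := by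
  obtain ⟨j, hj, hjw, h⟩ := exists_zero_mem_nsmul_of_width_pos hw
  exact (coheight_le hj h).trans hjw

end CoheightWidth

theorem le_mul_of_zero_mem_nsmul {p q k : ℕ} {T : Set ℕ} (hT : T ⊆ Set.Icc 1 q) (hk : 0 < k)
    (h : (0 : ZMod p) ∈ k • ((Nat.cast : ℕ → ZMod p) '' T)) : p ≤ q * k := by
  obtain ⟨m, hm, hm0⟩ := exists_mem_nsmul_natCast_eq h
  have hmk : k ≤ m ∧ m ≤ k * q := by
    simpa [mul_comm] using Set.nsmul_Icc_subset 1 q k (Set.nsmul_subset_nsmul_left hT hm)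
  rw [ZMod.natCast_eq_zero_iff] at hm0
  rw [mul_comm]
  exact (Nat.le_of_dvd (by omega) hm0).trans hmk.2

theorem le_mul_coheight {p q : ℕ} {T : Set ℕ} (hT : T ⊆ Set.Icc 1 q)
    (h : 0 < coheight ((Nat.cast : ℕ → ZMod p) '' T)) :
    p ≤ q * coheight ((Nat.cast : ℕ → ZMod p) '' T) :=
  le_mul_of_zero_mem_nsmul hT h (zero_mem_nsmul_coheight h)

theorem exists_le_mem_nsmul_erase_natCast_eq {q : ℕ} {T : Finset ℕ} (hq : 0 < q) (hqT : q ∈ T)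
    (hgcd : T.gcd id = 1) (x : ZMod q) :
    ∃ c ≤ q - 1, ∃ B ∈ c • (T.erase q : Set ℕ), (B : ZMod q) = x := by
  have : NeZero q := ⟨hq.ne'⟩
  set X := (insert 0 (T.erase q)).image (Nat.cast : ℕ → ZMod q)
  have hTX : (fun s ↦ ((id s : ℕ) : ZMod q)) '' T ⊆ X := by
    rintro _ ⟨s, hs, rfl⟩
    obtain rfl | hsq := eq_or_ne s q
    · simp [X]
    · exact Finset.mem_image_of_mem _ (Finset.mem_insert_of_mem (Finset.mem_erase.mpr ⟨hsq, hs⟩))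
  have hx : x ∈ (AddSubgroup.closure (X : Set (ZMod q)) : Set (ZMod q)) := by
    rw [← ZMod.natCast_zmod_val x, ← nsmul_one]
    exact AddSubgroup.nsmul_mem _
      (AddSubgroup.closure_mono hTX (one_mem_closure_natCast_of_gcd_eq_one hgcd)) _
  rw [← Finset.nsmul_card_sub_one_eq_closure (by simp [X]), ZMod.card, Finset.coe_image,
    Finset.coe_insert] at hx
  obtain ⟨B, hB, hBx⟩ := exists_mem_nsmul_natCast_eq hx
  obtain ⟨c, hc, hBc⟩ := Set.mem_iUnion₂.mp (Set.nsmul_insert_zero_subset _ _ hB)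
  exact ⟨c, hc, B, hBc, hBx⟩

section Representation

variable {p q r : ℕ} {T : Finset ℕ} (hqT : q ∈ T) (hT : (T : Set ℕ) ⊆ Set.Icc 1 q)
  (hTr : ∀ s ∈ T, s ≠ q → s ≤ r) (hgcd : T.gcd id = 1)
include hqT hT hTr hgcd

theorem exists_mem_nsmul_of_le {N : ℕ} (hN : (q - 1) * r ≤ N) :
    ∃ t, N ∈ t • (T : Set ℕ) ∧ q * t ≤ N + (q - 1) * (q - 1) := by
  have hq : 0 < q := (hT hqT).1
  obtain ⟨c, hc, B, hBc, hBN⟩ := exists_le_mem_nsmul_erase_natCast_eq hq hqT hgcd (N : ZMod q)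
  have hS : (T.erase q : Set ℕ) ⊆ Set.Icc 1 r := fun s hs ↦
    ⟨(hT (Finset.mem_of_mem_erase hs)).1,
      hTr s (Finset.mem_of_mem_erase hs) (Finset.ne_of_mem_erase hs)⟩
  have hB : c ≤ B ∧ B ≤ c * r := by
    simpa [mul_comm] using Set.nsmul_Icc_subset 1 r c (Set.nsmul_subset_nsmul_left hS hBc)
  have hBN' : B ≤ N := hB.2.trans ((Nat.mul_le_mul_right r hc).trans hN)
  obtain ⟨u, hu⟩ : q ∣ N - B :=
    (Nat.modEq_iff_dvd' hBN').mp ((ZMod.natCast_eq_natCast_iff _ _ _).mp hBN)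
  refine ⟨c + u, ?_, ?_⟩
  · have hST : (T.erase q : Set ℕ) ⊆ T := Finset.coe_subset.mpr (Finset.erase_subset _ _)
    rw [show N = B + u • q by rw [smul_eq_mul, mul_comm, ← hu]; omega, add_nsmul]
    exact Set.add_mem_add (Set.nsmul_subset_nsmul_left hST hBc) (Set.nsmul_mem_nsmul hqT)
  · have : q * c ≤ (q - 1) * (q - 1) + c :=
      calc q * c = (q - 1) * c + c := by
            conv_lhs => rw [show q = q - 1 + 1 by omega]
            ring
        _ ≤ (q - 1) * (q - 1) + c := by gcongr
    rw [mul_add, ← hu]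
    omega

theorem exists_mem_nsmul_natCast_image [NeZero p] (hqr : 0 < (q - 1) * r) (g : ZMod p) :
    ∃ j, 0 < j ∧ j ≤ (p - 1 + (q - 1) * r + (q - 1) * (q - 1)) / q ∧
      g ∈ j • ((Nat.cast : ℕ → ZMod p) '' T) := by
  set M := (q - 1) * r
  -- `M + (g - M).val` is the representative of `g` in `[M, M + p)`.
  obtain ⟨t, hNt, ht⟩ :=
    exists_mem_nsmul_of_le hqT hT hTr hgcd (N := M + (g - (M : ZMod p)).val) le_self_add
  have hNg : ((M + (g - (M : ZMod p)).val : ℕ) : ZMod p) = g := by simp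
  refine ⟨t, Nat.pos_of_ne_zero ?_, ?_, hNg ▸ natCast_mem_nsmul_natCast_image hNt⟩
  · rintro rfl
    simp at hNt
    omega
  · rw [Nat.le_div_iff_mul_le (hT hqT).1, mul_comm]
    have := ZMod.val_lt (g - (M : ZMod p))
    omega

theorem mul_width_lt [NeZero p] (hqr : 0 < (q - 1) * r) :
    q * width ((Nat.cast : ℕ → ZMod p) '' T) < p + q * (q + r) := by
  have hw := Nat.mul_le_mul_left q
    (width_le (exists_mem_nsmul_natCast_image (p := p) hqT hT hTr hgcd hqr))
  have := Nat.mul_div_le (p - 1 + (q - 1) * r + (q - 1) * (q - 1)) q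
  have : (q - 1) * r ≤ q * r := Nat.mul_le_mul_right r (Nat.sub_le q 1)
  have : (q - 1) * (q - 1) ≤ q * q := Nat.mul_le_mul (Nat.sub_le q 1) (Nat.sub_le q 1)
  have := NeZero.pos p
  rw [mul_add]
  omega

theorem mul_coheight_lt (hp : r * (q - 1) < p) :
    q * coheight ((Nat.cast : ℕ → ZMod p) '' T) < p + q * q := by
  obtain ⟨t, hpt, ht⟩ :=
    exists_mem_nsmul_of_le hqT hT hTr hgcd (N := p) (by rw [mul_comm]; omega)
  have ht0 : 0 < t := Nat.pos_of_ne_zero (by rintro rfl; simp at hpt; omega)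
  have := Nat.mul_le_mul_left q
    (coheight_le ht0 (by simpa using natCast_mem_nsmul_natCast_image (R := ZMod p) hpt))
  have : (q - 1) * (q - 1) < q * q := Nat.mul_self_lt_mul_self (Nat.sub_lt (hT hqT).1 one_pos)
  omega

end Representation

theorem natCast_lt_div_add_of_mul_lt {x p q c : ℕ} (hq : 0 < q) (h : q * x < p + q * c) :
    (x : ℝ) < p / q + c := by
  rw [div_add' _ _ _ (by positivity), lt_div_iff₀ (by positivity)]
  exact_mod_cast (by linarith : x * q < p + c * q)

theorem div_le_natCast_of_le_mul {x p q : ℕ} (hq : 0 < q) (h : p ≤ q * x) :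
    (p : ℝ) / q ≤ x := by
  rw [div_le_iff₀ (by positivity)]
  exact_mod_cast (by linarith : p ≤ x * q)

theorem Finset.coe_image_univ_subset_Icc {n : ℕ} {a : Fin n → ℕ} (hmono : Monotone a)
    (hn : 0 < n) : (Finset.univ.image a : Set ℕ) ⊆ Set.Icc (a ⟨0, hn⟩) (a ⟨n - 1, by omega⟩) := by
  simp only [Finset.coe_image, Finset.coe_univ, Set.image_univ, Set.range_subset_iff]
  exact fun i ↦ ⟨hmono (Fin.le_def.mpr (Nat.zero_le _)),
    hmono (Fin.le_def.mpr (by have := i.2; simp only; omega))⟩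

theorem StrictMono.le_of_mem_image_univ_of_ne {n : ℕ} {a : Fin n → ℕ} (hmono : StrictMono a)
    (hn : 2 ≤ n) {s : ℕ} (hs : s ∈ Finset.univ.image a) (hsq : s ≠ a ⟨n - 1, by omega⟩) :
    s ≤ a ⟨n - 2, by omega⟩ := by
  obtain ⟨i, -, rfl⟩ := Finset.mem_image.mp hs
  have : (i : ℕ) ≠ n - 1 := fun h ↦ hsq (congrArg a (Fin.ext h))
  exact hmono.monotone (Fin.le_def.mpr (by have := i.2; simp only; omega))

theorem coheight_width_bounds (p n : ℕ) (hn : 2 ≤ n) (a : Fin n → ℕ)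
    (ha0 : 0 < a ⟨0, by omega⟩) (hmono : StrictMono a)
    (hap : a ⟨n - 1, by omega⟩ < p)
    (hgcd : Finset.univ.gcd a = 1)
    (A : Set (ZMod p)) (hA : A = Set.range fun i => ((a i : ZMod p))) :
    ((p : ℝ) / (a ⟨n - 1, by omega⟩ : ℝ) ≤ (coheight A : ℝ) ∧
      coheight A ≤ width A ∧
      (width A : ℝ) < (p : ℝ) / (a ⟨n - 1, by omega⟩ : ℝ) +
        (a ⟨n - 1, by omega⟩ : ℝ) + (a ⟨n - 2, by omega⟩ : ℝ)) ∧
    (a ⟨n - 2, by omega⟩ * (a ⟨n - 1, by omega⟩ - 1) < p →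
      (coheight A : ℝ) < (p : ℝ) / (a ⟨n - 1, by omega⟩ : ℝ) + (a ⟨n - 1, by omega⟩ : ℝ)) := by
  have : NeZero p := ⟨by omega⟩
  set q := a ⟨n - 1, by omega⟩
  set r := a ⟨n - 2, by omega⟩
  set T := Finset.univ.image a
  have hqT : q ∈ T := Finset.mem_image_of_mem a (Finset.mem_univ _)
  have hT : (T : Set ℕ) ⊆ Set.Icc 1 q :=
    (Finset.coe_image_univ_subset_Icc hmono.monotone (by omega)).trans (Set.Icc_subset_Icc_left ha0)
  have hTr (s : ℕ) (hs : s ∈ T) (hsq : s ≠ q) : s ≤ r := hmono.le_of_mem_image_univ_of_ne hn hs hsq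
  have hgcdT : T.gcd id = 1 := by rwa [Finset.gcd_image]
  have hr : 0 < r := (hT (Finset.mem_image_of_mem a (Finset.mem_univ _))).1
  have hrq : r < q := hmono (Fin.lt_def.mpr (by simp only; omega))
  have hq : 0 < q := hr.trans hrq
  obtain rfl : A = (Nat.cast : ℕ → ZMod p) '' T := by
    rw [hA, Finset.coe_image, Finset.coe_univ, Set.image_univ, ← Set.range_comp]; rfl
  have hqr : 0 < (q - 1) * r := Nat.mul_pos (by omega) hr
  have hw0 := width_pos (exists_mem_nsmul_natCast_image (p := p) hqT hT hTr hgcdT hqr)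
  have hw := mul_width_lt (p := p) hqT hT hTr hgcdT hqr
  refine ⟨⟨div_le_natCast_of_le_mul hq (le_mul_coheight hT (coheight_pos_of_width_pos hw0)),
    coheight_le_width hw0, ?_⟩, fun h ↦ ?_⟩
  · rw [add_assoc]
    exact_mod_cast natCast_lt_div_add_of_mul_lt hq hw
  · exact_mod_cast natCast_lt_div_add_of_mul_lt hq (mul_coheight_lt hqT hT hTr hgcdT h)
end

section
/- Let n be a positive integer, let (a₁, …, aₙ) ∈ ℤⁿ be nonzero, and let p be a prime such that p > |aᵢ·aⱼ| − min_k |a_k| for all i ≠ j, and p > |aᵢ| for all i. Then 0 ≤ (1/p)·h_p(ā₁,…,āₙ) − h_∞(a₁,…,aₙ) ≤ |a₁ + ⋯ + aₙ|/p, where āᵢ denotes the residue of aᵢ modulo p. -/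
/-- Nathanson height of a subspace `V ⊆ (ℤ/pℤ)^n`. -/
noncomputable def nheight {p n : ℕ} (V : Submodule (ZMod p) (Fin n → ZMod p)) : ℕ :=
  sInf {k : ℕ | ∃ v ∈ V, v ≠ 0 ∧ k = ∑ i, (v i).val}

/-- `fx a x = liminf_{t → x} ∑ᵢ {aᵢ t}`, where `{y}` is the fractional part and the limit
is over the punctured neighborhood of `x`. -/
noncomputable def fx {n : ℕ} (a : Fin n → ℤ) (x : ℝ) : ℝ :=
  Filter.liminf (fun t : ℝ => ∑ i, Int.fract ((a i : ℝ) * t)) (nhdsWithin x {x}ᶜ)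

/-- `hinf a` is the minimum of `fx a x` over `x ∈ [0, 1)`. -/
noncomputable def hinf {n : ℕ} (a : Fin n → ℤ) : ℝ :=
  sInf (fx a '' Set.Ico (0 : ℝ) 1)

/-!
Write `F(t) = ∑ᵢ {aᵢ t}`. For `p ∤ m`, `p · F(m/p)` is the height of `m · ā`, so `h_p / p` is the
minimum of `F` over such points, while `f_x` is the smaller one-sided limit of `F` at `x`. At a
minimising point `m/p` no `aᵢ m` is divisible by `p`, so `F` is continuous there and
`h_∞ ≤ h_p / p`.

Conversely, let `M = ⌊p x⌋`. For `t ∈ {M/p, (M+1)/p}`, `F(t)` exceeds the right limit of `F` at `x`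
by at most `(∑ aᵢ)(t - x)` unless a breakpoint `k/aᵢ` with `aᵢ > 0` lies in `(M/p, x]`, resp. one
with `aᵢ < 0` lies in `(x, (M+1)/p)`. Both choices of `t` fail only if `p` divides `M` or `M + 1`
while a fraction with denominator at most `p` lies strictly between `M/p` and `(M+1)/p`, or if two
fractions with denominators `|aᵢ|`, `|aⱼ|` lie there, which forces `p ≤ |aᵢ aⱼ| - |aᵢ| - |aⱼ|`.
Applying this to `-a` and `-x` handles the left limit.
-/

open Filter Topology

theorem liminf_nhdsNE_eq_min {f : ℝ → ℝ} {x l r : ℝ} (hl : Tendsto f (𝓝[<] x) (𝓝 l))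
    (hr : Tendsto f (𝓝[>] x) (𝓝 r)) : liminf f (𝓝[≠] x) = min l r := by
  rw [← nhdsLT_sup_nhdsGT]
  have hbdd : IsBoundedUnder (· ≥ ·) (𝓝[<] x ⊔ 𝓝[>] x) f := by
    rw [IsBoundedUnder, map_sup]
    exact isBounded_sup hl.isBoundedUnder_ge hr.isBoundedUnder_ge
  refine le_antisymm (le_min ?_ ?_) (le_of_forall_lt_imp_le_of_dense fun c hc => ?_)
  · rw [← hl.liminf_eq]
    exact liminf_le_liminf_of_le le_sup_left hbdd hl.isCoboundedUnder_ge
  · rw [← hr.liminf_eq]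
    exact liminf_le_liminf_of_le le_sup_right hbdd hr.isCoboundedUnder_ge
  · refine le_liminf_of_le (IsCobounded.mono (map_mono le_sup_right) hr.isCoboundedUnder_ge) ?_
    exact eventually_sup.2
      ⟨(hl.eventually_const_lt (hc.trans_le (min_le_left l r))).mono fun _ => le_of_lt,
        (hr.eventually_const_lt (hc.trans_le (min_le_right l r))).mono fun _ => le_of_lt⟩

section FractSum

variable {n : ℕ}

noncomputable def fractSum (a : Fin n → ℤ) (t : ℝ) : ℝ := ∑ i, Int.fract ((a i : ℝ) * t)

/-- The limit of `⌊b * t⌋` as `t → x⁺`. -/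
noncomputable def floorRight (b : ℤ) (x : ℝ) : ℤ :=
  if b < 0 then ⌈(b : ℝ) * x⌉ - 1 else ⌊(b : ℝ) * x⌋

noncomputable def fractSumRight (a : Fin n → ℤ) (x : ℝ) : ℝ :=
  ∑ i, ((a i : ℝ) * x - floorRight (a i) x)

theorem floorRight_le (b : ℤ) (x : ℝ) : (floorRight b x : ℝ) ≤ b * x := by
  unfold floorRight
  split_ifs
  · push_cast
    linarith [Int.ceil_lt_add_one ((b : ℝ) * x)]
  · exact Int.floor_le _

theorem floorRight_lt_of_neg {b : ℤ} (hb : b < 0) (x : ℝ) : (floorRight b x : ℝ) < b * x := by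
  rw [floorRight, if_pos hb]
  push_cast
  linarith [Int.ceil_lt_add_one ((b : ℝ) * x)]

theorem floorRight_eq_floor {b : ℤ} {x : ℝ} (h : b < 0 → Int.fract ((b : ℝ) * x) ≠ 0) :
    floorRight b x = ⌊(b : ℝ) * x⌋ := by
  unfold floorRight
  split_ifs with hb
  · rw [(Int.ceil_eq_floor_add_one_iff_notMem _).2 (Int.fract_ne_zero_iff.1 (h hb))]
    ring
  · rfl

theorem eventually_floor_mul_eq_floorRight (b : ℤ) (x : ℝ) :
    ∀ᶠ t in 𝓝[>] x, ⌊(b : ℝ) * t⌋ = floorRight b x := by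
  have hmul : Tendsto (fun t => (b : ℝ) * t) (𝓝[>] x) (𝓝 ((b : ℝ) * x)) :=
    ((continuous_const_mul _).tendsto x).mono_left nhdsWithin_le_nhds
  unfold floorRight
  split_ifs with hb
  · have hbR : (b : ℝ) < 0 := by exact_mod_cast hb
    have hmap : Tendsto (fun t => (b : ℝ) * t) (𝓝[>] x) (𝓝[<] ((b : ℝ) * x)) :=
      tendsto_nhdsWithin_iff.2 ⟨hmul, eventually_nhdsWithin_of_forall fun t ht =>
        mul_lt_mul_of_neg_left ht hbR⟩
    have hlt : ((⌈(b : ℝ) * x⌉ - 1 : ℤ) : ℝ) < (b : ℝ) * x := by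
      push_cast
      linarith [Int.ceil_lt_add_one ((b : ℝ) * x)]
    filter_upwards [hmap.eventually (Ioo_mem_nhdsLT hlt)] with t ht
    rw [Int.floor_eq_iff]
    push_cast at ht ⊢
    exact ⟨ht.1.le, by linarith [ht.2, Int.le_ceil ((b : ℝ) * x)]⟩
  · have hbR : (0 : ℝ) ≤ b := by exact_mod_cast not_lt.1 hb
    have hmap : Tendsto (fun t => (b : ℝ) * t) (𝓝[>] x) (𝓝[≥] ((b : ℝ) * x)) :=
      tendsto_nhdsWithin_iff.2 ⟨hmul, eventually_nhdsWithin_of_forall fun t ht =>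
        mul_le_mul_of_nonneg_left (le_of_lt ht) hbR⟩
    filter_upwards [hmap.eventually (Ico_mem_nhdsGE (Int.lt_floor_add_one ((b : ℝ) * x)))]
      with t ht
    exact Int.floor_eq_iff.2 ⟨(Int.floor_le _).trans ht.1, ht.2⟩

theorem fractSum_eq_fractSumRight_add_sub (a : Fin n → ℤ) (x t : ℝ) :
    fractSum a t = fractSumRight a x + (∑ i, (a i : ℝ)) * (t - x) -
      ∑ i, ((⌊(a i : ℝ) * t⌋ : ℝ) - floorRight (a i) x) := by
  simp only [fractSum, fractSumRight, ← Int.self_sub_floor, Finset.sum_mul,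
    ← Finset.sum_add_distrib, ← Finset.sum_sub_distrib]
  exact Finset.sum_congr rfl fun i _ => by ring

theorem fractSum_le_fractSumRight_add {a : Fin n → ℤ} {x t : ℝ}
    (h : ∀ i, (floorRight (a i) x : ℝ) ≤ a i * t) :
    fractSum a t ≤ fractSumRight a x + (∑ i, (a i : ℝ)) * (t - x) := by
  rw [fractSum_eq_fractSumRight_add_sub a x t, sub_le_self_iff]
  exact Finset.sum_nonneg fun i _ => sub_nonneg.2 (by exact_mod_cast Int.le_floor.2 (h i))

theorem tendsto_fractSum_nhdsGT (a : Fin n → ℤ) (x : ℝ) :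
    Tendsto (fractSum a) (𝓝[>] x) (𝓝 (fractSumRight a x)) := by
  have hlin : Tendsto (fun t => fractSumRight a x + (∑ i, (a i : ℝ)) * (t - x)) (𝓝[>] x)
      (𝓝 (fractSumRight a x)) := by
    have hcont : Continuous fun t => fractSumRight a x + (∑ i, (a i : ℝ)) * (t - x) := by
      fun_prop
    simpa using (hcont.tendsto x).mono_left nhdsWithin_le_nhds
  refine hlin.congr' ?_
  filter_upwards [eventually_all.2 fun i => eventually_floor_mul_eq_floorRight (a i) x]
    with t ht
  simp [fractSum_eq_fractSumRight_add_sub a x t, ht]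

theorem fractSum_neg_neg (a : Fin n → ℤ) (t : ℝ) : fractSum (-a) (-t) = fractSum a t := by
  simp [fractSum]

theorem tendsto_fractSum_nhdsLT (a : Fin n → ℤ) (x : ℝ) :
    Tendsto (fractSum a) (𝓝[<] x) (𝓝 (fractSumRight (-a) (-x))) :=
  ((tendsto_fractSum_nhdsGT (-a) (-x)).comp tendsto_neg_nhdsLT).congr
    fun t => fractSum_neg_neg a t

theorem fx_eq_min (a : Fin n → ℤ) (x : ℝ) :
    fx a x = min (fractSumRight (-a) (-x)) (fractSumRight a x) :=
  liminf_nhdsNE_eq_min (tendsto_fractSum_nhdsLT a x) (tendsto_fractSum_nhdsGT a x)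

theorem fractSumRight_nonneg (a : Fin n → ℤ) (x : ℝ) : 0 ≤ fractSumRight a x :=
  Finset.sum_nonneg fun i _ => sub_nonneg.2 (floorRight_le (a i) x)

theorem fx_nonneg (a : Fin n → ℤ) (x : ℝ) : 0 ≤ fx a x :=
  fx_eq_min a x ▸ le_min (fractSumRight_nonneg _ _) (fractSumRight_nonneg _ _)

theorem fractSumRight_eq_fractSum {a : Fin n → ℤ} {x : ℝ}
    (h : ∀ i, a i < 0 → Int.fract ((a i : ℝ) * x) ≠ 0) : fractSumRight a x = fractSum a x :=
  Finset.sum_congr rfl fun i _ => by rw [floorRight_eq_floor (h i), Int.self_sub_floor]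

end FractSum

section Breakpoints

/-- In terms of fractions: `k / A` cannot lie strictly between `M / p` and `(M + 1) / p` when one
of them is an integer. -/
theorem not_dvd_of_fraction_mem_Ioo {A p M k : ℤ} (hA : 0 < A) (hAp : A ≤ p)
    (hk₁ : A * M < p * k) (hk₂ : p * k < A * (M + 1)) : ¬ p ∣ M ∧ ¬ p ∣ M + 1 := by
  constructor
  · rintro ⟨c, rfl⟩
    have : A * c < k := lt_of_mul_lt_mul_left (by linarith) (by linarith : (0 : ℤ) ≤ p)
    nlinarith
  · rintro ⟨c, hc⟩
    rw [hc] at hk₂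
    have : k < A * c := lt_of_mul_lt_mul_left (by linarith) (by linarith : (0 : ℤ) ≤ p)
    nlinarith

/-- In terms of fractions: `M / p < k / A < l / B < (M + 1) / p`. -/
theorem le_mul_sub_of_fractions_mem_Ioo {A B p M k l : ℤ} (hA : 0 < A) (hB : 0 < B)
    (hp : 0 ≤ p) (hk : A * M < p * k) (hl : p * l < B * (M + 1)) (hkl : B * k < A * l) :
    p ≤ A * B - A - B := by
  nlinarith

variable {p : ℕ} {b M : ℤ} {x : ℝ}

theorem exists_fraction_le_of_mul_lt_floorRight (hp : 0 < p) (hxM : (M : ℝ) / p ≤ x)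
    (hxM1 : x < (M + 1) / p) (h : (b : ℝ) * (M / p) < floorRight b x) :
    0 < b ∧ ∃ k : ℤ, b * M < p * k ∧ p * k < b * (M + 1) ∧ (k : ℝ) ≤ b * x := by
  have hpR : (0 : ℝ) < p := by exact_mod_cast hp
  have hb : 0 < b := by
    by_contra! hb
    have : (b : ℝ) * x ≤ b * (M / p) := mul_le_mul_of_nonpos_left hxM (by exact_mod_cast hb)
    linarith [floorRight_le b x]
  have hbR : (0 : ℝ) < b := by exact_mod_cast hb
  refine ⟨hb, floorRight b x, ?_, ?_, floorRight_le b x⟩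
  · rw [mul_div_assoc', div_lt_iff₀ hpR] at h
    exact_mod_cast (by linarith : (b : ℝ) * M < p * floorRight b x)
  · have : (b : ℝ) * x < b * ((M + 1) / p) := mul_lt_mul_of_pos_left hxM1 hbR
    rw [mul_div_assoc', lt_div_iff₀ hpR] at this
    exact_mod_cast (by nlinarith [floorRight_le b x] : (p : ℝ) * floorRight b x < b * (M + 1))

theorem exists_fraction_gt_of_mul_lt_floorRight (hp : 0 < p) (hxM : (M : ℝ) / p ≤ x)
    (hxM1 : x < (M + 1) / p) (h : (b : ℝ) * ((M + 1) / p) < floorRight b x) :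
    b < 0 ∧ ∃ l : ℤ, -b * M < p * l ∧ p * l < -b * (M + 1) ∧ -b * x < l := by
  have hpR : (0 : ℝ) < p := by exact_mod_cast hp
  have hb : b < 0 := by
    by_contra! hb
    have : (b : ℝ) * x ≤ b * ((M + 1) / p) :=
      mul_le_mul_of_nonneg_left hxM1.le (by exact_mod_cast hb)
    linarith [floorRight_le b x]
  have hbR : (b : ℝ) < 0 := by exact_mod_cast hb
  have hlt := floorRight_lt_of_neg hb x
  refine ⟨hb, -floorRight b x, ?_, ?_, by push_cast; linarith⟩
  · have : (b : ℝ) * x ≤ b * (M / p) := mul_le_mul_of_nonpos_left hxM hbR.le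
    rw [mul_div_assoc', le_div_iff₀ hpR] at this
    exact_mod_cast (by push_cast; nlinarith : -(b : ℝ) * M < p * (-floorRight b x : ℤ))
  · rw [mul_div_assoc', div_lt_iff₀ hpR] at h
    exact_mod_cast (by push_cast; linarith : (p : ℝ) * (-floorRight b x : ℤ) < -b * (M + 1))

end Breakpoints

section Window

variable {n p : ℕ}

theorem exists_floorRight_le_mul_div (hp : 2 ≤ p) (a : Fin n → ℤ)
    (h1 : ∀ i j : Fin n, i ≠ j → |a i * a j| - |a i| < (p : ℤ))
    (h2 : ∀ i : Fin n, |a i| ≤ (p : ℤ)) {M : ℤ} {x : ℝ} (hxM : (M : ℝ) / p ≤ x)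
    (hxM1 : x < (M + 1) / p) :
    ∃ m : ℤ, (m = M ∨ m = M + 1) ∧ ¬ (p : ℤ) ∣ m ∧
      ∀ i, (floorRight (a i) x : ℝ) ≤ a i * (m / p) := by
  by_contra! hbad
  have hright : ¬ (p : ℤ) ∣ M + 1 → ∃ j, a j < 0 ∧ ∃ l : ℤ, -a j * M < p * l ∧
      p * l < -a j * (M + 1) ∧ -a j * x < l := fun hd => by
    obtain ⟨j, hj⟩ := hbad (M + 1) (Or.inr rfl) hd
    push_cast at hj
    exact ⟨j, exists_fraction_gt_of_mul_lt_floorRight (by omega) hxM hxM1 hj⟩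
  by_cases hdM : (p : ℤ) ∣ M
  · have hdM1 : ¬ (p : ℤ) ∣ M + 1 := fun h => by
      have := Int.le_of_dvd one_pos ((Int.dvd_add_right hdM).1 h)
      omega
    obtain ⟨j, hj, l, hl₁, hl₂, -⟩ := hright hdM1
    exact (not_dvd_of_fraction_mem_Ioo (by omega) (by linarith [neg_abs_le (a j), h2 j])
      hl₁ hl₂).1 hdM
  obtain ⟨i, hi⟩ := hbad M (Or.inl rfl) hdM
  obtain ⟨hi, k, hk₁, hk₂, hkx⟩ := exists_fraction_le_of_mul_lt_floorRight (by omega) hxM hxM1 hi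
  by_cases hdM1 : (p : ℤ) ∣ M + 1
  · exact (not_dvd_of_fraction_mem_Ioo hi ((le_abs_self _).trans (h2 i)) hk₁ hk₂).2 hdM1
  obtain ⟨j, hj, l, -, hl₂, hlx⟩ := hright hdM1
  have hkl : -a j * k < a i * l := by
    have hiR : (0 : ℝ) < a i := by exact_mod_cast hi
    have hjR : (0 : ℝ) < -a j := by exact_mod_cast neg_pos.2 hj
    exact_mod_cast (by nlinarith : (-a j : ℝ) * k < a i * l)
  have hle := le_mul_sub_of_fractions_mem_Ioo hi (neg_pos.2 hj) (by positivity) hk₁ hl₂ hkl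
  have hij := h1 i j fun h => by rw [h] at hi; omega
  rw [abs_mul, abs_of_pos hi, abs_of_neg hj] at hij
  linarith

theorem exists_fractSum_le_fractSumRight_add (hp : 2 ≤ p) (a : Fin n → ℤ)
    (h1 : ∀ i j : Fin n, i ≠ j → |a i * a j| - |a i| < (p : ℤ))
    (h2 : ∀ i : Fin n, |a i| ≤ (p : ℤ)) (x : ℝ) :
    ∃ m : ℤ, ¬ (p : ℤ) ∣ m ∧
      fractSum a (m / p) ≤ fractSumRight a x + ((|∑ i, a i| : ℤ) : ℝ) / p := by
  have hpR : (0 : ℝ) < p := by positivity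
  have hxM : (⌊(p : ℝ) * x⌋ : ℝ) / p ≤ x := by
    rw [div_le_iff₀ hpR]
    linarith [Int.floor_le ((p : ℝ) * x)]
  have hxM1 : x < (⌊(p : ℝ) * x⌋ + 1) / p := by
    rw [lt_div_iff₀ hpR]
    linarith [Int.lt_floor_add_one ((p : ℝ) * x)]
  obtain ⟨m, hmM, hm, hle⟩ := exists_floorRight_le_mul_div hp a h1 h2 hxM hxM1
  have hmx : |(m : ℝ) / p - x| ≤ 1 / p := by
    rw [add_div] at hxM1
    rcases hmM with rfl | rfl
    · exact abs_le.2 ⟨by linarith, by linarith [one_div_pos.2 hpR]⟩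
    · push_cast
      rw [add_div]
      exact abs_le.2 ⟨by linarith, by linarith⟩
  refine ⟨m, hm, (fractSum_le_fractSumRight_add hle).trans ?_⟩
  gcongr
  calc (∑ i, (a i : ℝ)) * ((m : ℝ) / p - x)
      ≤ |∑ i, (a i : ℝ)| * |(m : ℝ) / p - x| := by rw [← abs_mul]; exact le_abs_self _
    _ ≤ |∑ i, (a i : ℝ)| * (1 / p) := by gcongr
    _ = ((|∑ i, a i| : ℤ) : ℝ) / p := by push_cast; ring

end Window

section Height

variable {n p : ℕ}

theorem nheight_le {V : Submodule (ZMod p) (Fin n → ZMod p)} {v : Fin n → ZMod p} (hv : v ∈ V)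
    (hv0 : v ≠ 0) : nheight V ≤ ∑ i, (v i).val :=
  Nat.sInf_le ⟨v, hv, hv0, rfl⟩

theorem exists_nheight_eq {V : Submodule (ZMod p) (Fin n → ZMod p)} (hV : V ≠ ⊥) :
    ∃ v ∈ V, v ≠ 0 ∧ nheight V = ∑ i, (v i).val :=
  Nat.sInf_mem (s := {k | ∃ v ∈ V, v ≠ 0 ∧ k = ∑ i, (v i).val})
    (let ⟨v, hv, hv0⟩ := Submodule.exists_mem_ne_zero_of_ne_bot hV; ⟨_, v, hv, hv0, rfl⟩)

theorem nheight_span_neg (w : Fin n → ZMod p) :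
    nheight (Submodule.span (ZMod p) {-w}) = nheight (Submodule.span (ZMod p) {w}) := by
  rw [← Set.neg_singleton, Submodule.span_neg]

theorem fract_intCast_div_natCast [NeZero p] (z : ℤ) :
    Int.fract ((z : ℝ) / p) = ((z : ZMod p).val : ℝ) / p := by
  rw [Int.fract_div_intCast_eq_div_intCast_mod, ← ZMod.val_intCast, Int.cast_natCast]

theorem sum_val_intCast_smul_eq_natCast_mul_fractSum [NeZero p] (a : Fin n → ℤ) (m : ℤ) :
    (∑ i, (((m : ZMod p) • fun i => (a i : ZMod p)) i).val : ℝ) = p * fractSum a (m / p) := by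
  have hp : (p : ℝ) ≠ 0 := by exact_mod_cast NeZero.ne p
  rw [fractSum, Finset.mul_sum]
  refine Finset.sum_congr rfl fun i _ => ?_
  rw [← mul_div_assoc, ← Int.cast_mul, fract_intCast_div_natCast, mul_div_cancel₀ _ hp]
  simp [mul_comm]

theorem intCast_ne_zero_of_abs_lt {b : ℤ} (hb : b ≠ 0) (hbp : |b| < p) : (b : ZMod p) ≠ 0 :=
  fun h => hb (Int.eq_zero_of_abs_lt_dvd ((ZMod.intCast_zmod_eq_zero_iff_dvd b p).1 h) hbp)

theorem fractSumRight_div_eq_fractSum [NeZero p] {a : Fin n → ℤ} {m : ℤ}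
    (h : ∀ i, a i < 0 → ((a i * m : ℤ) : ZMod p) ≠ 0) :
    fractSumRight a (m / p) = fractSum a (m / p) := by
  refine fractSumRight_eq_fractSum fun i hi => ?_
  rw [← mul_div_assoc, ← Int.cast_mul, fract_intCast_div_natCast]
  exact div_ne_zero (Nat.cast_ne_zero.2 ((ZMod.val_ne_zero _).2 (h i hi))) (NeZero.ne _)

variable [Fact p.Prime] {a : Fin n → ℤ}

theorem nheight_le_natCast_mul_fractSum (ha : (fun i => (a i : ZMod p)) ≠ 0) {m : ℤ}
    (hm : (m : ZMod p) ≠ 0) :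
    (nheight (Submodule.span (ZMod p) {fun i => (a i : ZMod p)}) : ℝ) ≤
      p * fractSum a (m / p) := by
  rw [← sum_val_intCast_smul_eq_natCast_mul_fractSum]
  exact_mod_cast nheight_le (Submodule.smul_mem _ _ (Submodule.mem_span_singleton_self _))
    (smul_ne_zero hm ha)

theorem exists_nheight_eq_natCast_mul_fractSum (ha : (fun i => (a i : ZMod p)) ≠ 0) :
    ∃ m : ℤ, 0 ≤ m ∧ m < p ∧ (m : ZMod p) ≠ 0 ∧
      (nheight (Submodule.span (ZMod p) {fun i => (a i : ZMod p)}) : ℝ) =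
        p * fractSum a (m / p) := by
  obtain ⟨v, hv, hv0, hH⟩ :=
    exists_nheight_eq (V := Submodule.span (ZMod p) {fun i => (a i : ZMod p)})
      (by rwa [Ne, Submodule.span_singleton_eq_bot])
  obtain ⟨c, rfl⟩ := Submodule.mem_span_singleton.1 hv
  have hc : ((c.val : ℤ) : ZMod p) = c := by simp
  refine ⟨c.val, by positivity, by exact_mod_cast c.val_lt, ?_, ?_⟩
  · rw [hc]
    rintro rfl
    exact hv0 (zero_smul _ _)
  · rw [← sum_val_intCast_smul_eq_natCast_mul_fractSum, hc, hH, Nat.cast_sum]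

theorem nheight_div_le_fractSumRight_add (ha : (fun i => (a i : ZMod p)) ≠ 0)
    (h1 : ∀ i j : Fin n, i ≠ j → |a i * a j| - |a i| < (p : ℤ))
    (h2 : ∀ i : Fin n, |a i| ≤ (p : ℤ)) (x : ℝ) :
    (nheight (Submodule.span (ZMod p) {fun i => (a i : ZMod p)}) : ℝ) / p ≤
      fractSumRight a x + ((|∑ i, a i| : ℤ) : ℝ) / p := by
  have hp : p.Prime := Fact.out
  obtain ⟨m, hm, hle⟩ := exists_fractSum_le_fractSumRight_add hp.two_le a h1 h2 x
  have hH := nheight_le_natCast_mul_fractSum ha ((ZMod.intCast_zmod_eq_zero_iff_dvd m p).not.2 hm)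
  rw [div_le_iff₀ (by exact_mod_cast hp.pos)]
  nlinarith

theorem nheight_div_sub_le_fx (ha : (fun i => (a i : ZMod p)) ≠ 0)
    (h1 : ∀ i j : Fin n, i ≠ j → |a i * a j| - |a i| < (p : ℤ))
    (h2 : ∀ i : Fin n, |a i| ≤ (p : ℤ)) (x : ℝ) :
    (nheight (Submodule.span (ZMod p) {fun i => (a i : ZMod p)}) : ℝ) / p -
      ((|∑ i, a i| : ℤ) : ℝ) / p ≤ fx a x := by
  have hR := nheight_div_le_fractSumRight_add ha h1 h2 x
  have hneg : (fun i => ((-a) i : ZMod p)) = -fun i => (a i : ZMod p) := by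
    ext i
    simp
  have hL := nheight_div_le_fractSumRight_add (hneg ▸ neg_ne_zero.2 ha)
    (fun i j hij => by simpa using h1 i j hij) (fun i => by simpa using h2 i) (-x)
  rw [hneg, nheight_span_neg] at hL
  simp only [Pi.neg_apply, Finset.sum_neg_distrib, abs_neg] at hL
  rw [fx_eq_min]
  exact le_min (by linarith) (by linarith)

theorem exists_fx_le_nheight_div (ha : (fun i => (a i : ZMod p)) ≠ 0)
    (h2 : ∀ i : Fin n, |a i| < (p : ℤ)) :
    ∃ x ∈ Set.Ico (0 : ℝ) 1,
      fx a x ≤ (nheight (Submodule.span (ZMod p) {fun i => (a i : ZMod p)}) : ℝ) / p := by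
  have hpR : (0 : ℝ) < p := by exact_mod_cast (Fact.out : p.Prime).pos
  obtain ⟨m, hm0, hmp, hm, hH⟩ := exists_nheight_eq_natCast_mul_fractSum ha
  have hcont : fractSumRight a (m / p) = fractSum a (m / p) :=
    fractSumRight_div_eq_fractSum fun i hi => by
      push_cast
      exact mul_ne_zero (intCast_ne_zero_of_abs_lt hi.ne (h2 i)) hm
  refine ⟨m / p, ⟨by positivity, (div_lt_one hpR).2 (by exact_mod_cast hmp)⟩, ?_⟩
  rw [hH, mul_div_cancel_left₀ _ hpR.ne', ← hcont, fx_eq_min]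
  exact min_le_right _ _

end Height

theorem hinf_approximates_height_general (n : ℕ) (a : Fin n → ℤ) (ha : a ≠ 0)
    (p : ℕ) (hp : p.Prime)
    (h1 : ∀ i j k : Fin n, i ≠ j → |a i * a j| - |a k| < (p : ℤ))
    (h2 : ∀ i : Fin n, |a i| < (p : ℤ)) :
    0 ≤ (nheight (Submodule.span (ZMod p) {fun i => ((a i : ZMod p))}) : ℝ) / p - hinf a ∧
    (nheight (Submodule.span (ZMod p) {fun i => ((a i : ZMod p))}) : ℝ) / p - hinf a ≤
      (|∑ i, a i| : ℤ) / p := by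
  have : Fact p.Prime := ⟨hp⟩
  have habar : (fun i => (a i : ZMod p)) ≠ 0 := fun h => by
    obtain ⟨i, hi⟩ := Function.ne_iff.1 ha
    exact intCast_ne_zero_of_abs_lt hi (h2 i) (congrFun h i)
  obtain ⟨x₀, hx₀, hfx₀⟩ := exists_fx_le_nheight_div habar h2
  have hlow : hinf a ≤ fx a x₀ :=
    csInf_le ⟨0, Set.forall_mem_image.2 fun x _ => fx_nonneg a x⟩ ⟨x₀, hx₀, rfl⟩
  have hup := le_csInf ((Set.nonempty_Ico.2 one_pos).image (fx a))
    (Set.forall_mem_image.2 fun x _ =>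
      nheight_div_sub_le_fx habar (fun i j hij => h1 i j i hij) (fun i => (h2 i).le) x)
  rw [← hinf] at hup
  constructor <;> linarith

theorem hinf_approximates_height (n : ℕ) (hn : 0 < n) (a : Fin n → ℤ) (ha : a ≠ 0)
    (p : ℕ) (hp : p.Prime)
    (h1 : ∀ i j k : Fin n, i ≠ j → |a i * a j| - |a k| < (p : ℤ))
    (h2 : ∀ i : Fin n, |a i| < (p : ℤ)) :
    0 ≤ (nheight (Submodule.span (ZMod p) {fun i => ((a i : ZMod p))}) : ℝ) / p - hinf a ∧
    (nheight (Submodule.span (ZMod p) {fun i => ((a i : ZMod p))}) : ℝ) / p - hinf a ≤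
      (|∑ i, a i| : ℤ) / p :=
  hinf_approximates_height_general n a ha p hp h1 h2
end
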